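/- (Correctness of the derandomized algorithm) Let P and Q be finite posets with k = |P|, let n = |Q|, fix a bijection between {1, ..., n} and the elements of Q, and let 𝓕 be an (n, 2^k·k, 2^k·k)-splitter. If P ⪯ Q, then there exist a function f ∈ 𝓕 and a function h : {1, ..., 2^k·k} → P such that the composition h ∘ f (viewed via the fixed bijection as a function from the elements of Q to the elements of P) is a witness for P ⪯ Q. -/

import Mathlib

/-- A chain in a poset: a finite sequence `(v_1, …, v_n)` with `v_i < v_j` for `i < j`,
modeled as a strictly increasing list. -/
def IsPosetChain {α : Type*} [PartialOrder α] (l : List α) : Prop :=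
  l.Chain' (· < ·)

/-- A partial function `f : Q ⇀ P` (modeled as `Q → Option P`) is a witness for `P ⪯ Q`:
for every chain `(c_1, …, c_n)` in `P` there is a chain `(c'_1, …, c'_n)` in `Q`
with `f (c'_i) = c_i` for all `i`. -/
def IsChainMinorWitness {P Q : Type*} [PartialOrder P] [PartialOrder Q]
    (f : Q → Option P) : Prop :=
  ∀ c : List P, IsPosetChain c →
    ∃ c' : List Q, IsPosetChain c' ∧ c'.map f = c.map some

/-- `P` is a chain minor of `Q` if there is a witness. -/
def ChainMinor (P Q : Type*) [PartialOrder P] [PartialOrder Q] : Prop :=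
  ∃ f : Q → Option P, IsChainMinorWitness f

/-- A total function `g : Q → P` is a witness for `P ⪯ Q`: for every chain
`(c_1, …, c_n)` in `P` there is a chain `(c'_1, …, c'_n)` in `Q` with
`g (c'_i) = c_i` for all `i`. -/
def IsTotalChainMinorWitness {P Q : Type*} [PartialOrder P] [PartialOrder Q]
    (g : Q → P) : Prop :=
  ∀ c : List P, IsPosetChain c →
    ∃ c' : List Q, IsPosetChain c' ∧ c'.map g = c

/-- An `(n, m, l)`-splitter: a family `F` of functions `{1, …, n} → {1, …, m}` such that
for every subset `W` of `{1, …, n}` with `|W| ≤ l` some `f ∈ F` is injective on `W`. -/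
def IsSplitter (n m l : ℕ) (F : Set (Fin n → Fin m)) : Prop :=
  ∀ W : Finset (Fin n), W.card ≤ l → ∃ f ∈ F, Set.InjOn f ↑W

/-! A chain of `P` is determined by its set of elements, so `P` has at most `2 ^ k` chains,
each of length at most `k`. Fixing one witness chain in `Q` for each of them uses at most
`2 ^ k * k` elements of `Q`; a member `f` of the splitter is injective on these, so a (totalised)
witness restricted to them factors through `f`, and any map agreeing with a witness on all the
fixed witness chains is again a witness. -/

namespace IsPosetChain

variable {α : Type*} [PartialOrder α]

lemma nodup {l : List α} (h : IsPosetChain l) : l.Nodup :=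
  (List.isChain_iff_pairwise.mp h).imp ne_of_lt

lemma eq_of_toFinset_eq [DecidableEq α] {l₁ l₂ : List α} (h₁ : IsPosetChain l₁)
    (h₂ : IsPosetChain l₂) (h : l₁.toFinset = l₂.toFinset) : l₁ = l₂ :=
  (List.perm_of_nodup_nodup_toFinset_eq h₁.nodup h₂.nodup h).eq_of_pairwise
    (fun _ _ _ _ hab hba => (lt_asymm hab hba).elim)
    (List.isChain_iff_pairwise.mp h₁) (List.isChain_iff_pairwise.mp h₂)

lemma length_le_card [Fintype α] {l : List α} (h : IsPosetChain l) :
    l.length ≤ Fintype.card α :=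
  h.nodup.length_le_card

lemma toFinset_injective [DecidableEq α] :
    Function.Injective fun c : {l : List α // IsPosetChain l} => c.1.toFinset :=
  fun c d h => Subtype.ext (c.2.eq_of_toFinset_eq d.2 h)

instance [Finite α] : Finite {l : List α // IsPosetChain l} := by
  classical
  exact Finite.of_injective _ toFinset_injective

lemma card_subtype_le [Fintype α] :
    Nat.card {l : List α // IsPosetChain l} ≤ 2 ^ Fintype.card α := by
  classical
  simpa using Nat.card_le_card_of_injective _ (toFinset_injective (α := α))

end IsPosetChain

lemma ChainMinor.exists_isTotalChainMinorWitness {P Q : Type*} [PartialOrder P]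
    [PartialOrder Q] [Nonempty P] (h : ChainMinor P Q) :
    ∃ g : Q → P, IsTotalChainMinorWitness g := by
  obtain ⟨f, hf⟩ := h
  refine ⟨fun q => (f q).getD (Classical.arbitrary P), fun c hc => ?_⟩
  obtain ⟨c', hc', hmap⟩ := hf c hc
  refine ⟨c', hc', ?_⟩
  simpa [List.map_map, Function.comp_def] using
    congrArg (List.map (·.getD (Classical.arbitrary P))) hmap

section

variable {P Q : Type*} [PartialOrder P] [PartialOrder Q]

def IsTotalChainMinorWitnessOn (g : Q → P) (S : Set Q) : Prop :=
  ∀ c : List P, IsPosetChain c →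
    ∃ c' : List Q, IsPosetChain c' ∧ c'.map g = c ∧ ∀ q ∈ c', q ∈ S

lemma IsTotalChainMinorWitness.exists_finset_witnessOn [Fintype P] {g : Q → P}
    (hg : IsTotalChainMinorWitness g) :
    ∃ S : Finset Q, S.card ≤ 2 ^ Fintype.card P * Fintype.card P ∧
      IsTotalChainMinorWitnessOn g S := by
  classical
  choose w hw using fun c : {l : List P // IsPosetChain l} => hg c.1 c.2
  have : Fintype {l : List P // IsPosetChain l} := Fintype.ofFinite _
  refine ⟨Finset.univ.biUnion fun c => (w c).toFinset, ?_, fun c hc => ?_⟩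
  · have hlen (c : {l : List P // IsPosetChain l}) : (w c).length = c.1.length := by
      simpa using congrArg List.length (hw c).2
    calc _ ≤ Finset.univ.card * Fintype.card P :=
          Finset.card_biUnion_le_card_mul _ _ _ fun c _ =>
            (List.toFinset_card_le _).trans ((hlen c).trans_le c.2.length_le_card)
      _ ≤ 2 ^ Fintype.card P * Fintype.card P := by
          gcongr
          simpa [Nat.card_eq_fintype_card] using IsPosetChain.card_subtype_le (α := P)
  · obtain ⟨hchain, hmap⟩ := hw ⟨c, hc⟩
    exact ⟨w ⟨c, hc⟩, hchain, hmap, fun q hq =>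
      Finset.mem_coe.mpr <| Finset.mem_biUnion.mpr
        ⟨⟨c, hc⟩, Finset.mem_univ _, List.mem_toFinset.mpr hq⟩⟩

lemma IsTotalChainMinorWitnessOn.congr {g : Q → P} {S : Set Q} (hS : IsTotalChainMinorWitnessOn g S)
    {g' : Q → P} (hgg' : Set.EqOn g' g S) : IsTotalChainMinorWitness g' := by
  intro c hc
  obtain ⟨c', hc', hmap, hsub⟩ := hS c hc
  exact ⟨c', hc', (List.map_congr_left fun q hq => hgg' (hsub q hq)).trans hmap⟩

lemma IsTotalChainMinorWitness.of_isEmpty [IsEmpty P] (g : Q → P) :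
    IsTotalChainMinorWitness g
  | [], _ => ⟨[], List.isChain_nil, rfl⟩
  | a :: _, _ => isEmptyElim a

end

lemma Set.InjOn.exists_comp_eq {α β γ : Type*} [Nonempty γ] {f : α → β} {s : Set α}
    (hf : s.InjOn f) (φ : α → γ) : ∃ g : β → γ, ∀ x ∈ s, g (f x) = φ x := by
  refine ⟨Function.extend (s.domRestrict f) (s.domRestrict φ) fun _ => Classical.arbitrary γ,
    fun x hx => ?_⟩
  exact (Set.injOn_iff_injective.mp hf).extend_apply _ _ ⟨x, hx⟩

theorem splitter_correctness_general {P Q : Type*} [Fintype P] [PartialOrder P]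
    [PartialOrder Q] (k n : ℕ)
    (hk : k = Fintype.card P) (e : Fin n ≃ Q)
    (F : Set (Fin n → Fin (2 ^ k * k))) (hF : IsSplitter n (2 ^ k * k) (2 ^ k * k) F)
    (h : ChainMinor P Q) :
    ∃ f ∈ F, ∃ g : Fin (2 ^ k * k) → P,
      IsTotalChainMinorWitness (fun q : Q => g (f (e.symm q))) := by
  rcases isEmpty_or_nonempty P with hP | hP
  · obtain ⟨f, hfF, -⟩ := hF ∅ (Nat.zero_le _)
    have : IsEmpty (Fin (2 ^ k * k)) := by simp [hk]; exact Fin.isEmpty'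
    exact ⟨f, hfF, isEmptyElim, IsTotalChainMinorWitness.of_isEmpty _⟩
  obtain ⟨g₀, hg₀⟩ := h.exists_isTotalChainMinorWitness
  obtain ⟨S, hScard, hS⟩ := hg₀.exists_finset_witnessOn
  obtain ⟨f, hfF, hinj⟩ := hF (S.map e.symm.toEmbedding) (by simpa [hk] using hScard)
  obtain ⟨g, hg⟩ := hinj.exists_comp_eq (g₀ ∘ e)
  refine ⟨f, hfF, g, hS.congr fun q hq => ?_⟩
  simpa using hg (e.symm q) (by simpa using hq)

/-- Correctness of the derandomized algorithm: if `k = |P|`, `n = |Q|`, a bijection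
between `{1, …, n}` and the elements of `Q` is fixed, `F` is an
`(n, 2^k·k, 2^k·k)`-splitter, and `P ⪯ Q`, then there are `f ∈ F` and
`h : {1, …, 2^k·k} → P` whose composition (viewed, via the bijection, as a function
from the elements of `Q` to the elements of `P`) is a witness for `P ⪯ Q`. -/
theorem splitter_correctness {P Q : Type*} [Fintype P] [PartialOrder P]
    [Fintype Q] [PartialOrder Q] (k n : ℕ)
    (hk : k = Fintype.card P) (hn : n = Fintype.card Q) (e : Fin n ≃ Q)
    (F : Set (Fin n → Fin (2 ^ k * k))) (hF : IsSplitter n (2 ^ k * k) (2 ^ k * k) F)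
    (h : ChainMinor P Q) :
    ∃ f ∈ F, ∃ g : Fin (2 ^ k * k) → P,
      IsTotalChainMinorWitness (fun q : Q => g (f (e.symm q))) :=
  splitter_correctness_general k n hk e F hF h
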